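/- arXiv:1103.5820 — 2 statements merged into one kernel-verified Lean document; each statement's English description precedes it below -/
import Mathlib

section
/- Every finitely generated free group has a descending chain of finite index subgroups tending to the trivial group; that is, there exist subgroups Γ₁ ⊋ Γ₂ ⊋ ⋯ of the free group F with Γ₁ = F, each Γᵢ of finite index in F, and ⋂ᵢ Γᵢ = {e}. -/
/-!
Free groups are residually finite: if `g = mk l ≠ 1`, let each generator `x` act on the finite
set `S` of elements `mk t` for suffixes `t` of `l` by a permutation extending `u ↦ x * u` wherever
this stays in `S`; peeling off letters, `g` moves `1 ∈ S` to `g`. In a countable, infinite,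
residually finite group, enumerate the nontrivial elements and at step `i` pass to a strictly
smaller finite-index subgroup that misses the `i`-th one; strictness is possible because a
finite-index subgroup of an infinite group contains some `h ≠ 1`, which a further finite-index
subgroup misses.
-/

theorem Group.exists_perm_apply_eq_mul_of_mem {G : Type*} [Group G] (S : Set G) [Finite S]
    (g : G) : ∃ σ : Equiv.Perm S, ∀ u : S, g * u ∈ S → (σ u : G) = g * u := by
  classical
  let e : {u : S // g * u ∈ S} ≃ {v : S // g⁻¹ * v ∈ S} :=
    { toFun := fun u => ⟨⟨g * u, u.2⟩, by simp⟩
      invFun := fun v => ⟨⟨g⁻¹ * v, v.2⟩, by simp⟩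
      left_inv := fun u => by ext; simp
      right_inv := fun v => by ext; simp }
  exact ⟨e.extendSubtype, fun u hu => by rw [e.extendSubtype_apply_of_mem u hu]; rfl⟩

namespace FreeGroup

variable {α : Type*}

instance (l : List (α × Bool)) :
    Finite (mk '' {t | t <:+ l}) := by
  simp_rw [← List.mem_tails]
  exact ((List.finite_toSet _).image _).to_subtype

theorem lift_mk_singleton_apply {S : Set (FreeGroup α)} (σ : α → Equiv.Perm S)
    (hσ : ∀ x (u : S), of x * (u : FreeGroup α) ∈ S → (σ x u : FreeGroup α) = of x * u)
    (a : α × Bool) (u : S) (hu : mk [a] * (u : FreeGroup α) ∈ S) :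
    (lift σ (mk [a]) u : FreeGroup α) = mk [a] * u := by
  obtain ⟨x, _ | _⟩ := a
  · have hx : (mk [(x, false)] : FreeGroup α) = (of x)⁻¹ := rfl
    rw [hx] at hu ⊢
    have hσx : σ x ⟨_, hu⟩ = u := Subtype.ext <| by simpa using hσ x ⟨_, hu⟩ (by simp)
    rw [_root_.map_inv, lift_apply_of, Equiv.Perm.inv_eq_iff_eq.mpr hσx.symm]
  · exact hσ x u hu

theorem exists_monoidHom_perm_apply_one_eq (l : List (α × Bool)) :
    ∃ φ : FreeGroup α →* Equiv.Perm (mk '' {t | t <:+ l}),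
      (φ (mk l) ⟨1, [], List.nil_suffix, rfl⟩ : FreeGroup α) = mk l := by
  choose σ hσ using fun x : α =>
    Group.exists_perm_apply_eq_mul_of_mem (mk '' {t | t <:+ l}) (of x)
  refine ⟨lift σ, ?_⟩
  suffices ∀ t, t <:+ l →
      (lift σ (mk t) ⟨1, [], List.nil_suffix, rfl⟩ : FreeGroup α) = mk t from
    this l List.suffix_rfl
  intro t ht
  induction t with
  | nil => rfl
  | cons a t ih =>
    have ht' : t <:+ l := (List.suffix_cons a t).trans ht
    have hmem : mk [a] * mk t ∈ mk '' {t | t <:+ l} := ⟨a :: t, ht, rfl⟩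
    rw [← List.singleton_append, ← mul_mk, _root_.map_mul, Equiv.Perm.mul_apply,
      lift_mk_singleton_apply σ hσ _ _ (by rwa [ih ht']), ih ht']

instance residuallyFinite : Group.ResiduallyFinite (FreeGroup α) := by
  classical
  refine Group.residuallyFinite_of_forall_exists_finite_monoidHom fun g hg => ?_
  obtain ⟨φ, hφ⟩ := exists_monoidHom_perm_apply_one_eq g.toWord
  refine ⟨_, _, inferInstance, φ, fun h => hg ?_⟩
  rw [mk_toWord, h] at hφ
  exact hφ.symm

end FreeGroup

section ResiduallyFinite

variable {G : Type*} [Group G] [Group.ResiduallyFinite G]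

theorem Subgroup.exists_finiteIndex_lt [Infinite G] (H : Subgroup G) [H.FiniteIndex] :
    ∃ K : Subgroup G, K.FiniteIndex ∧ K < H := by
  have hH_ne_bot : H ≠ ⊥ := by
    rintro rfl
    exact FiniteIndex.index_ne_zero (H := (⊥ : Subgroup G)) (by simp)
  obtain ⟨⟨h, hH⟩, hh⟩ := Subgroup.ne_bot_iff_exists_ne_one.mp hH_ne_bot
  obtain ⟨N, hN, hhN⟩ :=
    Group.residuallyFinite_iff_exists_finiteIndex.mp ‹_› h (by simpa using hh)
  exact ⟨H ⊓ N, inferInstance, lt_of_le_of_ne inf_le_left fun h' => hhN (h'.ge hH).2⟩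

theorem Subgroup.exists_finiteIndex_lt_notMem [Infinite G] (H : Subgroup G) [H.FiniteIndex]
    {g : G} (hg : g ≠ 1) : ∃ K : Subgroup G, K.FiniteIndex ∧ K < H ∧ g ∉ K := by
  obtain ⟨N, hN, hgN⟩ := Group.residuallyFinite_iff_exists_finiteIndex.mp ‹_› g hg
  obtain ⟨K, hK, hKlt⟩ := (H ⊓ N).exists_finiteIndex_lt
  exact ⟨K, hK, hKlt.trans_le inf_le_left, fun hgK => hgN (hKlt.le hgK).2⟩

theorem Group.exists_chain_finiteIndex_iInf_eq_bot [Countable G] [Infinite G] :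
    ∃ Γ : ℕ → Subgroup G, Γ 0 = ⊤ ∧ (∀ i, Γ (i + 1) < Γ i) ∧ (∀ i, (Γ i).FiniteIndex) ∧
      (⨅ i, Γ i) = ⊥ := by
  have : Nonempty {g : G // g ≠ 1} := nonempty_subtype.mpr (exists_ne 1)
  obtain ⟨e, he⟩ := exists_surjective_nat {g : G // g ≠ 1}
  choose K hK hKlt hKe using fun (H : {H : Subgroup G // H.FiniteIndex}) (i : ℕ) =>
    have := H.2; H.1.exists_finiteIndex_lt_notMem (e i).2
  let Γ : ℕ → {H : Subgroup G // H.FiniteIndex} :=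
    fun i => Nat.rec ⟨⊤, inferInstance⟩ (fun i H => ⟨K H i, hK H i⟩) i
  refine ⟨fun i => (Γ i).1, rfl, fun i => hKlt (Γ i) i, fun i => (Γ i).2, ?_⟩
  refine (Subgroup.eq_bot_iff_forall _).mpr fun g hg => by_contra fun hg1 => ?_
  obtain ⟨i, hi⟩ := he ⟨g, hg1⟩
  exact hKe (Γ i) i (hi ▸ Subgroup.mem_iInf.mp hg (i + 1))

end ResiduallyFinite

/-- Every finitely generated free group (on at least one generator) has a descending
chain of finite index subgroups tending to the trivial group. -/
theorem free_group_desc_chain_to_trivial (n : ℕ) (hn : 1 ≤ n) :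
    ∃ Γ : ℕ → Subgroup (FreeGroup (Fin n)),
      Γ 0 = ⊤ ∧ (∀ i, Γ (i + 1) < Γ i) ∧ (∀ i, (Γ i).FiniteIndex) ∧
      (⨅ i, Γ i) = ⊥ := by
  have : Nonempty (Fin n) := ⟨⟨0, hn⟩⟩
  exact Group.exists_chain_finiteIndex_iInf_eq_bot
end

section
/- A finitely generated free group is residually finite: for every nontrivial element g of a finitely generated free group F, there exists a finite index normal subgroup N of F not containing g. -/
/-!
Write a nontrivial element as a reduced word `x₀ x₁ ⋯ x_{L-1}` and let the generators act on the
points `0, 1, …, L`: a letter `xₖ = a` or `xₖ = a⁻¹` asks the permutation of `a` to move `k + 1`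
to `k`. Since the word is reduced, the requests made to each generator are compatible (they form
a partial injection), so they extend to permutations of `{0, …, L}`. The induced homomorphism to
this finite symmetric group sends the word to a permutation moving `L` to `0`, hence not to `1`.
-/

open Equiv

namespace Equiv.Perm

theorem list_prod_map_apply_last {γ β : Type*} (ρ : γ → Perm β) :
    ∀ (w : List γ) (p : Fin (w.length + 1) → β),
      (∀ k : Fin w.length, ρ w[k] (p k.succ) = p k.castSucc) →
      (w.map ρ).prod (p (Fin.last _)) = p 0
  | [], _, _ => rfl
  | x :: w, p, hp => by
    have htail := list_prod_map_apply_last ρ w (p ∘ Fin.succ) fun k => hp k.succ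
    simp only [List.map_cons, List.prod_cons, Perm.mul_apply]
    exact (congrArg (ρ x) htail).trans (hp 0)

end Equiv.Perm

namespace FreeGroup

variable {α : Type*} {w : List (α × Bool)}

theorem IsReduced.eq_snd_of_eq_fst (hw : IsReduced w) {k : ℕ} (hk : k + 1 < w.length)
    (h : w[k].1 = w[k + 1].1) : w[k].2 = w[k + 1].2 :=
  List.isChain_iff_getElem.mp hw k hk h

/-- For `c = true` the point that the `k`-th letter of `w` moves, for `c = false` its image. -/
def letterEndpoint (w : List (α × Bool)) (c : Bool) (k : Fin w.length) : Fin (w.length + 1) :=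
  if w[k].2 = c then k.succ else k.castSucc

theorem IsReduced.injective_letterEndpoint (hw : IsReduced w) (c : Bool) (a : α) :
    Function.Injective fun k : {k : Fin w.length // w[k].1 = a} => letterEndpoint w c k := by
  refine Function.Injective.of_lt_imp_ne fun ⟨⟨k, hk⟩, hka⟩ ⟨⟨l, hl⟩, hla⟩ hkl heq => ?_
  replace hkl : k < l := hkl
  replace heq := congrArg Fin.val heq
  simp only [letterEndpoint, Fin.getElem_fin] at heq hka hla
  -- Equal endpoints force `l = k + 1` with letters `a^ε`, `a^(-ε)`: a cancellation.
  obtain rfl : l = k + 1 := by split_ifs at heq <;> simp at heq <;> omega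
  have := hw.eq_snd_of_eq_fst hl (hka.trans hla.symm)
  split_ifs at heq <;> simp_all

theorem IsReduced.exists_perm_letter (hw : IsReduced w) (a : α) :
    ∃ σ : Perm (Fin (w.length + 1)),
      ∀ k : Fin w.length, w[k].1 = a → cond w[k].2 σ σ⁻¹ k.succ = k.castSucc := by
  obtain ⟨σ, hσ⟩ := Perm.exists_extending_pair _ _
    (hw.injective_letterEndpoint true a) (hw.injective_letterEndpoint false a)
  refine ⟨σ, fun k hk => ?_⟩
  have hσk := hσ ⟨k, hk⟩
  cases hb : w[k].2 <;> simp only [letterEndpoint, hb] at hσk ⊢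
  · exact Perm.inv_eq_iff_eq.mpr hσk.symm
  · exact hσk

theorem exists_monoidHom_perm_apply_ne_one [DecidableEq α] {g : FreeGroup α} (hg : g ≠ 1) :
    ∃ φ : FreeGroup α →* Perm (Fin (g.toWord.length + 1)), φ g ≠ 1 := by
  choose σ hσ using (isReduced_toWord (x := g)).exists_perm_letter
  have hprod : lift σ g = (g.toWord.map fun x => cond x.2 (σ x.1) (σ x.1)⁻¹).prod := by
    rw [← lift_mk, mk_toWord]
  have hlast : lift σ g (Fin.last _) = 0 := by
    rw [hprod]
    exact Perm.list_prod_map_apply_last _ _ id fun k => hσ _ k rfl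
  have hlen : g.toWord.length ≠ 0 := by simpa [toWord_eq_nil_iff] using hg
  refine ⟨lift σ, fun h => ?_⟩
  rw [h, Perm.one_apply] at hlast
  exact hlen (Fin.last_eq_zero_iff.mp hlast)

instance : Group.ResiduallyFinite (FreeGroup α) := by
  classical
  refine Group.residuallyFinite_of_forall_exists_finite_monoidHom fun _ hg => ?_
  obtain ⟨φ, hφ⟩ := exists_monoidHom_perm_apply_ne_one hg
  exact ⟨_, inferInstance, inferInstance, φ, hφ⟩

end FreeGroup

/-- A finitely generated free group is residually finite. -/
theorem free_group_residually_finite (n : ℕ) (g : FreeGroup (Fin n)) (hg : g ≠ 1) :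
    ∃ N : Subgroup (FreeGroup (Fin n)), N.Normal ∧ N.FiniteIndex ∧ g ∉ N := by
  obtain ⟨N, hgN⟩ := Group.exists_finiteIndexNormalSubgroup_notMem g hg
  exact ⟨N, inferInstance, inferInstance, hgN⟩
end
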